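/- Let a₁ ≤ a₂ ≤ ⋯ ≤ a_L be real numbers (L a positive integer), let ā = (a₁+⋯+a_L)/L be their average, and for x ∈ [1,L] define f(x) = a₁+⋯+a_{⌊x⌋} + (x−⌊x⌋)·a_{⌊x⌋+1} (so f(L) = a₁+⋯+a_L). Then f(x) ≤ x·ā for every x ∈ [1,L]. Moreover, if f(x) = x·ā for some x ∈ [1,L), then a₁ = a₂ = ⋯ = a_L = ā. -/

import Mathlib

noncomputable section

/-- The partial sum `a₁ + ⋯ + a_x` of the values of `a`, for a real index `x`,
i.e. `f(x) = a₁ + ⋯ + a_⌊x⌋ + (x - ⌊x⌋)·a_{⌊x⌋+1}`. -/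
def psum {L : ℕ} (a : Fin L → ℝ) (x : ℝ) : ℝ :=
  (∑ i : Fin L, if (i : ℕ) < ⌊x⌋₊ then a i else 0) +
    (x - (⌊x⌋₊ : ℝ)) * (if h : ⌊x⌋₊ < L then a ⟨⌊x⌋₊, h⟩ else 0)

namespace Stmt0Aux

variable {L : ℕ}

/-- prefix sum -/
def P (a : Fin L → ℝ) (k : ℕ) : ℝ := ∑ i : Fin L, if (i : ℕ) < k then a i else 0

lemma sum_succ (f : Fin L → ℝ) (k : ℕ) (h : k < L) :
    (∑ i : Fin L, if (i : ℕ) < k + 1 then f i else 0)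
      = (∑ i : Fin L, if (i : ℕ) < k then f i else 0) + f ⟨k, h⟩ := by
  have key : ∀ i : Fin L, (if (i : ℕ) < k + 1 then f i else 0)
      = (if (i : ℕ) < k then f i else 0) + (if i = ⟨k, h⟩ then f i else 0) := by
    intro i
    rcases lt_trichotomy (i : ℕ) k with hi | hi | hi
    · rw [if_pos (Nat.lt_succ_of_lt hi), if_pos hi, if_neg, add_zero]
      intro e; rw [e] at hi; simp at hi
    · rw [if_pos (by omega), if_neg (by omega), if_pos (by ext; exact hi), zero_add]
    · rw [if_neg (by omega), if_neg (by omega), if_neg, add_zero]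
      intro e; rw [e] at hi; simp at hi
  simp only [key, Finset.sum_add_distrib, Finset.sum_ite_eq' Finset.univ, Finset.mem_univ,
    if_true]

lemma P_succ (a : Fin L → ℝ) (k : ℕ) (h : k < L) : P a (k + 1) = P a k + a ⟨k, h⟩ :=
  sum_succ a k h

lemma count_eq (k : ℕ) (hk : k ≤ L) :
    (∑ _i : Fin L, if (_i : ℕ) < k then (1 : ℝ) else 0) = k := by
  induction k with
  | zero => simp
  | succ n ih =>
    rw [sum_succ (fun _ => (1:ℝ)) n (by omega), ih (by omega)]
    push_cast; ring

lemma P_L (a : Fin L → ℝ) : P a L = ∑ i, a i := by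
  unfold P
  refine Finset.sum_congr rfl fun i _ => if_pos i.isLt

lemma tail_eq (a : Fin L → ℝ) (k : ℕ) :
    (∑ i : Fin L, if ¬ ((i : ℕ) < k) then a i else 0) = (∑ i, a i) - P a k := by
  unfold P
  rw [eq_sub_iff_add_eq, ← Finset.sum_add_distrib]
  refine Finset.sum_congr rfl fun i _ => ?_
  by_cases h : (i : ℕ) < k <;> simp [h]

lemma tail_count (k : ℕ) (hk : k ≤ L) :
    (∑ _i : Fin L, if ¬ ((_i : ℕ) < k) then (1 : ℝ) else 0) = (L : ℝ) - k := by
  have := tail_eq (fun _ : Fin L => (1:ℝ)) k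
  rw [this]
  have : P (fun _ : Fin L => (1:ℝ)) k = k := count_eq k hk
  rw [this]; simp

/-- key double-sum identity -/
lemma key_sum (a : Fin L → ℝ) (k : ℕ) (hk : k ≤ L) :
    (∑ i : Fin L, ∑ j : Fin L,
        if (i : ℕ) < k ∧ ¬ ((j : ℕ) < k) then a j - a i else 0)
      = (k : ℝ) * (∑ i, a i) - (L : ℝ) * P a k := by
  have hterm : ∀ i j : Fin L,
      (if (i : ℕ) < k ∧ ¬ ((j : ℕ) < k) then a j - a i else 0)
        = (if (i : ℕ) < k then (1:ℝ) else 0) * (if ¬ ((j : ℕ) < k) then a j else 0)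
          - (if (i : ℕ) < k then a i else 0) * (if ¬ ((j : ℕ) < k) then (1:ℝ) else 0) := by
    intro i j
    by_cases h1 : (i : ℕ) < k <;> by_cases h2 : (j : ℕ) < k <;> simp [h1, h2]
  simp only [hterm, Finset.sum_sub_distrib, ← Finset.sum_mul, ← Finset.mul_sum]
  rw [count_eq k hk, tail_eq, tail_count k hk]
  show (k : ℝ) * ((∑ i, a i) - P a k) - P a k * ((L : ℝ) - k)
      = (k : ℝ) * (∑ i, a i) - (L : ℝ) * P a k
  ring

lemma key_le (a : Fin L → ℝ) (ha : Monotone a) (k : ℕ) (hk : k ≤ L) :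
    (L : ℝ) * P a k ≤ (k : ℝ) * (∑ i, a i) := by
  rw [← sub_nonneg, ← key_sum a k hk]
  refine Finset.sum_nonneg fun i _ => Finset.sum_nonneg fun j _ => ?_
  by_cases h : (i : ℕ) < k ∧ ¬ ((j : ℕ) < k)
  · rw [if_pos h]
    have : i ≤ j := by
      obtain ⟨h1, h2⟩ := h
      exact le_of_lt (by omega : (i : ℕ) < (j : ℕ))
    linarith [ha this]
  · rw [if_neg h]

lemma key_eq (a : Fin L → ℝ) (ha : Monotone a) (k : ℕ) (hk1 : 1 ≤ k) (hkL : k < L)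
    (heq : (L : ℝ) * P a k = (k : ℝ) * (∑ i, a i)) :
    ∀ i j : Fin L, a i = a j := by
  have hzero : (∑ i : Fin L, ∑ j : Fin L,
      if (i : ℕ) < k ∧ ¬ ((j : ℕ) < k) then a j - a i else 0) = 0 := by
    rw [key_sum a k (le_of_lt hkL), heq, sub_self]
  have hnn : ∀ i j : Fin L, 0 ≤ (if (i : ℕ) < k ∧ ¬ ((j : ℕ) < k) then a j - a i else 0) := by
    intro i j
    by_cases h : (i : ℕ) < k ∧ ¬ ((j : ℕ) < k)
    · rw [if_pos h]
      have : i ≤ j := le_of_lt (by omega : (i : ℕ) < (j : ℕ))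
      linarith [ha this]
    · rw [if_neg h]
  have hall : ∀ i j : Fin L, (i : ℕ) < k → ¬ ((j : ℕ) < k) → a i = a j := by
    intro i j hi hj
    have h1 := (Finset.sum_eq_zero_iff_of_nonneg
      (fun i _ => Finset.sum_nonneg fun j _ => hnn i j)).mp hzero i (Finset.mem_univ i)
    have h2 := (Finset.sum_eq_zero_iff_of_nonneg (fun j _ => hnn i j)).mp h1 j
      (Finset.mem_univ j)
    rw [if_pos ⟨hi, hj⟩] at h2
    linarith
  intro i j
  have hL : 0 < L := lt_of_le_of_lt (Nat.zero_le k) hkL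
  set p : Fin L := ⟨0, hL⟩
  set q : Fin L := ⟨k, hkL⟩
  have hpq : a p = a q := hall p q (show (0:ℕ) < k by omega) (show ¬ (k < k) by omega)
  have val : ∀ i : Fin L, a i = a q := by
    intro i
    by_cases h : (i : ℕ) < k
    · exact hall i q h (show ¬ (k < k) by omega)
    · rw [← hall p i (show (0:ℕ) < k by omega) h, hpq]
  rw [val i, val j]

end Stmt0Aux

open Stmt0Aux
/-- for a monotone tuple `a₁ ≤ ⋯ ≤ a_L` with average `ā`, the partial
sum function `f` satisfies `f(x) ≤ x·ā` on `[1, L]`; moreover if `f(x) = x·ā` for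
some `x ∈ [1, L)` then all `aᵢ` are equal to `ā`. -/
theorem stmt_0 (L : ℕ) (hL : 0 < L) (a : Fin L → ℝ) (ha : Monotone a) :
    (∀ x : ℝ, 1 ≤ x → x ≤ (L : ℝ) →
      psum a x ≤ x * ((∑ i, a i) / (L : ℝ))) ∧
    (∀ x : ℝ, 1 ≤ x → x < (L : ℝ) →
      psum a x = x * ((∑ i, a i) / (L : ℝ)) →
      ∀ i, a i = (∑ i, a i) / (L : ℝ)) := by
  have hLpos : (0 : ℝ) < L := by exact_mod_cast hL
  set S := ∑ i, a i with hS
  constructor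
  · intro x hx1 hxL
    set n := ⌊x⌋₊ with hn
    have hnx : (n : ℝ) ≤ x := Nat.floor_le (by linarith)
    have hxn : x < n + 1 := Nat.lt_floor_add_one x
    have hnL : n ≤ L := by exact_mod_cast hnx.trans hxL
    rcases eq_or_lt_of_le hnL with heq | hlt
    · -- n = L, so x = L
      have hxL' : x = L := le_antisymm hxL (by rw [← heq]; exact hnx)
      have : psum a x = S := by
        unfold psum
        rw [← hn, heq, dif_neg (lt_irrefl L)]
        rw [show (∑ i : Fin L, if (i : ℕ) < L then a i else 0) = P a L from rfl, P_L]
        rw [hxL', mul_zero, add_zero]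
      rw [this, hxL']
      field_simp
      exact le_rfl
    · -- n < L
      have hpsum : psum a x = P a n + (x - n) * a ⟨n, hlt⟩ := by
        unfold psum
        rw [← hn, dif_pos hlt]; rfl
      have h1 : (L : ℝ) * P a n ≤ (n : ℝ) * S := key_le a ha n hnL
      have h2 : (L : ℝ) * P a (n + 1) ≤ ((n : ℝ) + 1) * S := by
        have := key_le a ha (n + 1) hlt
        push_cast at this
        exact this
      rw [P_succ a n hlt] at h2
      rw [hpsum]
      have ht0 : (0:ℝ) ≤ x - n := by linarith
      have ht1 : x - n ≤ 1 := by linarith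
      have e1 : P a n ≤ (n : ℝ) * S / L := by
        rw [le_div_iff₀ hLpos]; linarith
      have e2 : P a n + a ⟨n, hlt⟩ ≤ ((n : ℝ) + 1) * S / L := by
        rw [le_div_iff₀ hLpos]; linarith
      have c1 := mul_le_mul_of_nonneg_left e1 (by linarith : (0:ℝ) ≤ 1 - (x - n))
      have c2 := mul_le_mul_of_nonneg_left e2 ht0
      have hxeq : x * (S / L) = (1 - (x - n)) * ((n:ℝ) * S / L)
          + (x - n) * (((n:ℝ) + 1) * S / L) := by ring
      rw [hxeq]
      nlinarith [c1, c2]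
  · intro x hx1 hxL heq2
    set n := ⌊x⌋₊ with hn
    have hnx : (n : ℝ) ≤ x := Nat.floor_le (by linarith)
    have hxn : x < n + 1 := Nat.lt_floor_add_one x
    have hn1 : 1 ≤ n := by
      have : (1 : ℕ) ≤ ⌊x⌋₊ := Nat.le_floor (by exact_mod_cast hx1)
      exact this
    have hlt : n < L := by exact_mod_cast lt_of_le_of_lt hnx hxL
    have hpsum : psum a x = P a n + (x - n) * a ⟨n, hlt⟩ := by
      unfold psum
      rw [← hn, dif_pos hlt]; rfl
    rw [hpsum] at heq2
    have ht0 : (0:ℝ) ≤ x - n := by linarith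
    have ht1 : x - n < 1 := by linarith
    have h1 : (L : ℝ) * P a n ≤ (n : ℝ) * S := key_le a ha n (le_of_lt hlt)
    have h2 : (L : ℝ) * P a (n + 1) ≤ ((n : ℝ) + 1) * S := by
      have := key_le a ha (n + 1) hlt
      push_cast at this
      exact this
    rw [P_succ a n hlt] at h2
    have e1 : P a n ≤ (n : ℝ) * S / L := by
      rw [le_div_iff₀ hLpos]; linarith
    have e2 : P a n + a ⟨n, hlt⟩ ≤ ((n : ℝ) + 1) * S / L := by
      rw [le_div_iff₀ hLpos]; linarith
    have hcomb : (1 - (x - n)) * ((n:ℝ) * S / L - P a n)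
        + (x - n) * (((n:ℝ) + 1) * S / L - (P a n + a ⟨n, hlt⟩)) = 0 := by
      linear_combination -heq2
    have hu : (n : ℝ) * S / L - P a n = 0 := by
      nlinarith [mul_nonneg ht0 (sub_nonneg.mpr e2), sub_nonneg.mpr e1,
        mul_nonneg (by linarith : (0:ℝ) ≤ 1 - (x - n)) (sub_nonneg.mpr e1)]
    have hPn : (L : ℝ) * P a n = (n : ℝ) * S := by
      field_simp at hu
      linarith
    have hall := key_eq a ha n hn1 hlt hPn
    intro i
    have hsum : S = (L : ℝ) * a i := by
      rw [hS]
      rw [Finset.sum_congr rfl (fun j _ => hall j i)]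
      simp [Finset.sum_const, Finset.card_univ]
    rw [hsum]
    field_simp
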